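/- arXiv:math/0503141 — 2 statements merged into one kernel-verified Lean document; each statement's English description precedes it below -/
import Mathlib

section
/- Let {σ_k} be a sequence of switching signals, each with average dwell-time τ_D > 0 and chatter bound N₀ ∈ ℕ, taking values in a finite set Γ. Then there exist a subsequence {σ_{k_l}} and a switching signal σ with average dwell-time τ_D and chatter bound N₀ such that σ_{k_l}(t) → σ(t) for almost all t ≥ 0. -/
open Filter Set MeasureTheory

/-- The switching times (points of left-discontinuity) of a signal `σ` on `(0,∞)`. -/
def SwitchTimes {Γ : Type*} (σ : ℝ → Γ) : Set ℝ :=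
  {s | 0 < s ∧ ∀ ε > 0, ∃ u, s - ε < u ∧ u < s ∧ σ u ≠ σ s}

/-- `σ` is locally constant from the right at every time (right-continuity and
piecewise constancy from the right). -/
def RightLocConst {Γ : Type*} (σ : ℝ → Γ) : Prop :=
  ∀ s : ℝ, ∃ ε > 0, ∀ u : ℝ, s ≤ u → u < s + ε → σ u = σ s

/-- `σ` has average dwell-time `τD` and chatter bound `N₀`: the number of switching
times in any open interval `(τ₁,τ₂) ⊆ ℝ₊` is at most `N₀ + (τ₂ - τ₁)/τD`. -/
def HasADT {Γ : Type*} (σ : ℝ → Γ) (τD : ℝ) (N₀ : ℕ) : Prop :=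
  ∀ τ₁ τ₂ : ℝ, 0 ≤ τ₁ → τ₁ < τ₂ →
    (Nat.card ↥(SwitchTimes σ ∩ Set.Ioo τ₁ τ₂) : ℝ) ≤ (N₀ : ℝ) + (τ₂ - τ₁) / τD

/-- A switching signal with average dwell-time `τD > 0` and chatter bound `N₀`:
piecewise constant, right-continuous, with the average dwell-time property. -/
def IsSwitchingSignal {Γ : Type*} (σ : ℝ → Γ) (τD : ℝ) (N₀ : ℕ) : Prop :=
  RightLocConst σ ∧ HasADT σ τD N₀

open Topology

/-!
For every rational `q` record the value `σ k q` and the number of switches of `σ k` in `(0, q]`.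
Both range over finite sets (the count by the dwell-time bound), so a diagonal subsequence makes
all of them eventually constant, with limits `f q` and `g q`. Where `g` is locally constant the
signals of the subsequence eventually have no switch, hence converge; every other positive time is
a limit switch time, i.e. every neighbourhood of it eventually contains a switch. Disjoint
neighbourhoods of `n` limit switch times eventually contain `n` distinct switches of one signal, so
limit switch times obey the same dwell-time bound and are countable. The limit signal is the right
limit of `f`; its switch times are limit switch times, which gives its dwell-time bound.
-/

theorem exists_strictMono_eventually_eq {ι : Type*} [Countable ι] {α : ι → Type*}
    [∀ i, Finite (α i)] (x : ℕ → ∀ i, α i) :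
    ∃ φ : ℕ → ℕ, StrictMono φ ∧ ∃ y : ∀ i, α i, ∀ i, ∀ᶠ l in atTop, x (φ l) i = y i := by
  let (i : ι) : TopologicalSpace (α i) := ⊥
  have (i : ι) : DiscreteTopology (α i) := ⟨rfl⟩
  obtain ⟨y, φ, hφ, hlim⟩ := CompactSpace.tendsto_subseq x
  exact ⟨φ, hφ, y, fun i => by simpa [nhds_discrete] using tendsto_pi_nhds.1 hlim i⟩

theorem finite_inter_Ioo_of_ncard_le {α : Type*} [LinearOrder α] [DenselyOrdered α]
    {s : Set α} {a y : α} {B : ℕ}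
    (h : ∀ b < y, (s ∩ Ioo a b).Finite ∧ (s ∩ Ioo a b).ncard ≤ B) : (s ∩ Ioo a y).Finite := by
  by_contra hinf
  obtain ⟨t, hts, hcard⟩ := Set.Infinite.exists_subset_card_eq hinf (B + 1)
  have htne : t.Nonempty := Finset.card_pos.1 (by omega)
  obtain ⟨b, hb, hby⟩ := exists_between (hts (t.max'_mem htne)).2.2
  have hsub : (t : Set α) ⊆ s ∩ Ioo a b :=
    fun u hu => ⟨(hts hu).1, (hts hu).2.1, (t.le_max' u hu).trans_lt hb⟩
  have hle := ncard_le_ncard hsub (h b hby).1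
  rw [ncard_coe_finset] at hle
  have := (h b hby).2
  omega

section SwitchTimes

variable {Γ : Type*} {σ : ℝ → Γ} {τD : ℝ} {N₀ : ℕ}

theorem RightLocConst.switchTimes_inter_Ioc_nonempty (hσ : RightLocConst σ) {a b : ℝ}
    (ha : 0 ≤ a) (hab : a ≤ b) (hne : σ b ≠ σ a) : (SwitchTimes σ ∩ Ioc a b).Nonempty := by
  set T := {t ∈ Icc a b | σ t ≠ σ a}
  have hbT : b ∈ T := ⟨⟨hab, le_rfl⟩, hne⟩
  have hbdd : BddBelow T := ⟨a, fun t ht => ht.1.1⟩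
  set c := sInf T
  have hcb : c ≤ b := csInf_le hbdd hbT
  have hbefore : ∀ t, a ≤ t → t < c → σ t = σ a := fun t hat htc => by
    by_contra h
    exact (csInf_le hbdd ⟨⟨hat, htc.le.trans hcb⟩, h⟩).not_gt htc
  have hc : σ c ≠ σ a := by
    intro hca
    obtain ⟨ε, hε, hconst⟩ := hσ c
    obtain ⟨t, ht, htc⟩ := exists_lt_of_csInf_lt ⟨b, hbT⟩ (lt_add_of_pos_right c hε)
    exact ht.2 ((hconst t (csInf_le hbdd ht) htc).trans hca)
  have hac : a < c :=
    (le_csInf ⟨b, hbT⟩ fun t ht => ht.1.1).lt_of_ne (ne_of_apply_ne σ hc).symm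
  refine ⟨c, ⟨ha.trans_lt hac, fun ε hε => ⟨max a (c - ε / 2), ?_, ?_, ?_⟩⟩, hac, hcb⟩
  · exact lt_max_of_lt_right (by linarith)
  · exact max_lt hac (by linarith)
  · rw [hbefore _ (le_max_left _ _) (max_lt hac (by linarith))]
    exact hc.symm

theorem RightLocConst.eq_of_switchTimes_inter_Ioc_eq_empty (hσ : RightLocConst σ) {a b : ℝ}
    (ha : 0 ≤ a) (hab : a ≤ b) (h : SwitchTimes σ ∩ Ioc a b = ∅) : σ b = σ a := by
  by_contra hne
  exact (hσ.switchTimes_inter_Ioc_nonempty ha hab hne).ne_empty h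

theorem RightLocConst.exists_switchTimes_inter_Ioo_eq_empty (hσ : RightLocConst σ) (y : ℝ) :
    ∃ ε > 0, SwitchTimes σ ∩ Ioo y (y + ε) = ∅ := by
  obtain ⟨ε, hε, hconst⟩ := hσ y
  refine ⟨ε, hε, eq_empty_of_forall_notMem fun s ⟨hs, hys, hsy⟩ => ?_⟩
  obtain ⟨u, hsu, hus, hne⟩ := hs.2 (s - y) (by linarith)
  exact hne ((hconst u (by linarith) (by linarith)).trans
    (hconst s hys.le (by linarith)).symm)

theorem IsSwitchingSignal.finite_switchTimes_inter_Ioo (hσ : IsSwitchingSignal σ τD N₀)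
    (hτ : 0 < τD) {τ₁ τ₂ : ℝ} (h₁ : 0 ≤ τ₁) : (SwitchTimes σ ∩ Ioo τ₁ τ₂).Finite := by
  obtain ⟨B, hB⟩ := exists_nat_ge ((N₀ : ℝ) + (τ₂ - τ₁) / τD)
  have hcard : ∀ b ≤ τ₂, (SwitchTimes σ ∩ Ioo τ₁ b).ncard ≤ B := by
    intro b hb
    rcases le_or_gt b τ₁ with hbτ | hbτ
    · simp [Ioo_eq_empty (not_lt.2 hbτ)]
    have hadt := hσ.2 τ₁ b h₁ hbτ
    rw [Nat.card_coe_set_eq] at hadt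
    have : (b - τ₁) / τD ≤ (τ₂ - τ₁) / τD := by gcongr
    exact_mod_cast (by linarith : ((SwitchTimes σ ∩ Ioo τ₁ b).ncard : ℝ) ≤ B)
  -- switches accumulate at `sSup A` neither from the left (they are at most `B`) nor from the
  -- right (`σ` is right-locally constant), so `sSup A` cannot lie below `τ₂`
  set A := {b | b ≤ τ₂ ∧ (SwitchTimes σ ∩ Ioo τ₁ b).Finite}
  have hAne : A.Nonempty := ⟨min τ₁ τ₂, min_le_right _ _, by simp [Ioo_eq_empty]⟩
  have hAbdd : BddAbove A := ⟨τ₂, fun b hb => hb.1⟩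
  have hfin : (SwitchTimes σ ∩ Ioo τ₁ (sSup A)).Finite := by
    refine finite_inter_Ioo_of_ncard_le (B := B) fun b hb => ?_
    obtain ⟨b', ⟨hb'τ, hb'fin⟩, hbb'⟩ := exists_lt_of_lt_csSup hAne hb
    exact ⟨hb'fin.subset (inter_subset_inter_right _ (Ioo_subset_Ioo_right hbb'.le)),
      hcard b (hbb'.le.trans hb'τ)⟩
  have hτ₂ : τ₂ ≤ sSup A := by
    by_contra! hlt
    obtain ⟨ε, hε, hgap⟩ := hσ.1.exists_switchTimes_inter_Ioo_eq_empty (sSup A)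
    have hmem : min (sSup A + ε) τ₂ ∈ A := by
      refine ⟨min_le_right _ _, (hfin.union (finite_singleton (sSup A))).subset ?_⟩
      intro u hu
      obtain ⟨hu, hτu, hub⟩ := hu
      rcases lt_trichotomy u (sSup A) with h | h | h
      · exact Or.inl ⟨hu, hτu, h⟩
      · exact Or.inr h
      · have hu' : u ∈ SwitchTimes σ ∩ Ioo (sSup A) (sSup A + ε) :=
          ⟨hu, h, hub.trans_le (min_le_left _ _)⟩
        rw [hgap] at hu'
        exact hu'.elim
    exact (le_csSup hAbdd hmem).not_gt (lt_min (by linarith) hlt)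
  exact hfin.subset (inter_subset_inter_right _ (Ioo_subset_Ioo_right hτ₂))

theorem IsSwitchingSignal.finite_switchTimes_inter_Ioc (hσ : IsSwitchingSignal σ τD N₀)
    (hτ : 0 < τD) (t : ℝ) : (SwitchTimes σ ∩ Ioc 0 t).Finite :=
  (hσ.finite_switchTimes_inter_Ioo hτ le_rfl (τ₂ := t + 1)).subset
    (inter_subset_inter_right _ fun _ hu => ⟨hu.1, hu.2.trans_lt (lt_add_one t)⟩)

noncomputable def switchCount (σ : ℝ → Γ) (t : ℝ) : ℕ :=
  (SwitchTimes σ ∩ Ioc 0 t).ncard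

theorem IsSwitchingSignal.switchCount_le (hσ : IsSwitchingSignal σ τD N₀) (hτ : 0 < τD)
    (t : ℝ) : switchCount σ t ≤ ⌊(N₀ : ℝ) + (|t| + 1) / τD⌋₊ := by
  apply Nat.le_floor
  have hsub : SwitchTimes σ ∩ Ioc 0 t ⊆ SwitchTimes σ ∩ Ioo 0 (|t| + 1) :=
    inter_subset_inter_right _ fun _ hu => ⟨hu.1, hu.2.trans_lt (by linarith [le_abs_self t])⟩
  have hadt := hσ.2 0 (|t| + 1) le_rfl (by positivity)
  rw [Nat.card_coe_set_eq, sub_zero] at hadt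
  exact le_trans (by exact_mod_cast ncard_le_ncard hsub (hσ.finite_switchTimes_inter_Ioo hτ le_rfl))
    hadt

theorem switchCount_eq_add {a b : ℝ} (hfin : (SwitchTimes σ ∩ Ioc 0 b).Finite) (ha : 0 ≤ a)
    (hab : a ≤ b) :
    switchCount σ b = switchCount σ a + (SwitchTimes σ ∩ Ioc a b).ncard := by
  unfold switchCount
  rw [← ncard_union_eq (disjoint_left.2 fun u hu hu' => lt_irrefl u (hu.2.2.trans_lt hu'.2.1))
    (hfin.subset (inter_subset_inter_right _ (Ioc_subset_Ioc_right hab)))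
    (hfin.subset (inter_subset_inter_right _ (Ioc_subset_Ioc_left ha))),
    ← inter_union_distrib_left, Ioc_union_Ioc_eq_Ioc ha hab]

end SwitchTimes

section LimSwitchTimes

variable {Γ : Type*} {x : ℕ → ℝ → Γ} {τD : ℝ} {N₀ : ℕ}

def LimSwitchTimes (x : ℕ → ℝ → Γ) : Set ℝ :=
  {s | ∀ U ∈ 𝓝 s, ∀ᶠ l in atTop, (SwitchTimes (x l) ∩ U).Nonempty}

theorem mem_limSwitchTimes_of_forall_exists {s : ℝ}
    (h : ∀ ε > 0, ∃ a b : ℝ, s - ε < a ∧ b < s + ε ∧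
      ∀ᶠ l in atTop, (SwitchTimes (x l) ∩ Ioc a b).Nonempty) :
    s ∈ LimSwitchTimes x := by
  intro U hU
  obtain ⟨ε, hε, hball⟩ := Metric.mem_nhds_iff.1 hU
  obtain ⟨a, b, ha, hb, hev⟩ := h ε hε
  filter_upwards [hev] with l ⟨u, hu, hau, hub⟩
  exact ⟨u, hu, hball (by rw [Real.ball_eq_Ioo]; exact ⟨ha.trans hau, hub.trans_lt hb⟩)⟩

theorem card_le_of_subset_limSwitchTimes (hx : ∀ l, IsSwitchingSignal (x l) τD N₀)
    (hτ : 0 < τD) {τ₁ τ₂ : ℝ} (h₁ : 0 ≤ τ₁) (h₁₂ : τ₁ < τ₂) {F : Finset ℝ}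
    (hF : ↑F ⊆ LimSwitchTimes x ∩ Ioo τ₁ τ₂) :
    (F.card : ℝ) ≤ N₀ + (τ₂ - τ₁) / τD := by
  obtain ⟨U, hU, hdisj⟩ := F.finite_toSet.t2_separation
  have hev : ∀ᶠ l in atTop, ∀ s ∈ F, (SwitchTimes (x l) ∩ (U s ∩ Ioo τ₁ τ₂)).Nonempty :=
    (eventually_all_finset F).2 fun s hs => (hF hs).1 _
      (inter_mem ((hU s).2.mem_nhds (hU s).1) (isOpen_Ioo.mem_nhds (hF hs).2))
  obtain ⟨l, hl⟩ := hev.exists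
  choose! w hw using hl
  have hinj : InjOn w F := fun s hs s' hs' hss' =>
    hdisj.elim hs hs' (not_disjoint_iff.2 ⟨w s, (hw s hs).2.1, hss' ▸ (hw s' hs').2.1⟩)
  have hcard := ncard_le_ncard_of_injOn (t := SwitchTimes (x l) ∩ Ioo τ₁ τ₂) w
    (fun s hs => ⟨(hw s hs).1, (hw s hs).2.2⟩) hinj ((hx l).finite_switchTimes_inter_Ioo hτ h₁)
  have hadt := (hx l).2 τ₁ τ₂ h₁ h₁₂
  rw [ncard_coe_finset] at hcard
  rw [Nat.card_coe_set_eq] at hadt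
  exact le_trans (by exact_mod_cast hcard) hadt

theorem finite_limSwitchTimes_inter_Ioo (hx : ∀ l, IsSwitchingSignal (x l) τD N₀)
    (hτ : 0 < τD) {τ₁ τ₂ : ℝ} (h₁ : 0 ≤ τ₁) : (LimSwitchTimes x ∩ Ioo τ₁ τ₂).Finite := by
  by_contra hinf
  rcases le_or_gt τ₂ τ₁ with h₂₁ | h₁₂
  · simp [Ioo_eq_empty (not_lt.2 h₂₁)] at hinf
  obtain ⟨F, hF, hcard⟩ :=
    Set.Infinite.exists_subset_card_eq hinf (⌊(N₀ : ℝ) + (τ₂ - τ₁) / τD⌋₊ + 1)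
  have hle := card_le_of_subset_limSwitchTimes hx hτ h₁ h₁₂ hF
  rw [hcard] at hle
  push_cast at hle
  linarith [Nat.lt_floor_add_one ((N₀ : ℝ) + (τ₂ - τ₁) / τD)]

theorem hasADT_of_switchTimes_subset_limSwitchTimes {σ : ℝ → Γ}
    (hx : ∀ l, IsSwitchingSignal (x l) τD N₀) (hτ : 0 < τD)
    (h : SwitchTimes σ ⊆ LimSwitchTimes x) : HasADT σ τD N₀ := by
  intro τ₁ τ₂ h₁ h₁₂
  have hfin := finite_limSwitchTimes_inter_Ioo hx hτ h₁ (τ₂ := τ₂)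
  rw [Nat.card_coe_set_eq]
  calc ((SwitchTimes σ ∩ Ioo τ₁ τ₂).ncard : ℝ) ≤ (LimSwitchTimes x ∩ Ioo τ₁ τ₂).ncard := by
        exact_mod_cast ncard_le_ncard (inter_subset_inter_left _ h) hfin
    _ = hfin.toFinset.card := by rw [ncard_eq_toFinset_card _ hfin]
    _ ≤ N₀ + (τ₂ - τ₁) / τD := card_le_of_subset_limSwitchTimes hx hτ h₁ h₁₂ (by simp)

theorem countable_limSwitchTimes_inter_Ioi (hx : ∀ l, IsSwitchingSignal (x l) τD N₀)
    (hτ : 0 < τD) : (LimSwitchTimes x ∩ Ioi 0).Countable := by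
  refine (countable_iUnion fun n : ℕ =>
    (finite_limSwitchTimes_inter_Ioo hx hτ le_rfl (τ₂ := n)).countable).mono ?_
  rintro s ⟨hs, hs0⟩
  obtain ⟨n, hn⟩ := exists_nat_gt s
  exact mem_iUnion.2 ⟨n, hs, hs0, hn⟩

end LimSwitchTimes

section LimitSignal

variable {Γ : Type*} {f : ℚ → Γ} {g : ℚ → ℕ}

noncomputable def rightRat (g : ℚ → ℕ) (t : ℝ) : ℚ :=
  Function.argminOn g {q : ℚ | max t 0 < q} (exists_rat_gt (max t 0))

theorem lt_rightRat (g : ℚ → ℕ) (t : ℝ) : max t 0 < rightRat g t :=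
  Function.argminOn_mem g {q : ℚ | max t 0 < q} _

theorem apply_eq_apply_rightRat (hmono : MonotoneOn g (Ici 0)) {t : ℝ} {r : ℚ}
    (hr : max t 0 < r) (hr' : r ≤ rightRat g t) : g r = g (rightRat g t) := by
  have hr0 : (0 : ℚ) ≤ r := by exact_mod_cast ((le_max_right t 0).trans hr.le)
  exact le_antisymm (hmono hr0 (hr0.trans hr') hr') (Function.argminOn_le g _ hr)

/-- `g` is constant on the rationals of `(max t 0, rightRat g t]`, so this is the right limit of
`f` at `t`. -/
noncomputable def limitSignal (f : ℚ → Γ) (g : ℚ → ℕ) (t : ℝ) : Γ :=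
  f (rightRat g t)

theorem eq_limitSignal (hmono : MonotoneOn g (Ici 0))
    (hfg : ∀ q r : ℚ, 0 ≤ q → 0 ≤ r → g q = g r → f q = f r) {t : ℝ} {r : ℚ}
    (hr : max t 0 < r) (hr' : r ≤ rightRat g t) : f r = limitSignal f g t := by
  have hr0 : (0 : ℚ) ≤ r := by exact_mod_cast ((le_max_right t 0).trans hr.le)
  exact hfg _ _ hr0 (hr0.trans hr') (apply_eq_apply_rightRat hmono hr hr')

theorem rightLocConst_limitSignal (hmono : MonotoneOn g (Ici 0))
    (hfg : ∀ q r : ℚ, 0 ≤ q → 0 ≤ r → g q = g r → f q = f r) :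
    RightLocConst (limitSignal f g) := by
  intro t
  have ht := lt_rightRat g t
  refine ⟨rightRat g t - t, sub_pos.2 ((le_max_left t 0).trans_lt ht), fun u htu hu => ?_⟩
  have hu := lt_rightRat g u
  set r := min (rightRat g u) (rightRat g t)
  have hur : max u 0 < r := by
    simp only [r, Rat.cast_min]
    exact lt_min hu (max_lt (by linarith) ((le_max_right t 0).trans_lt ht))
  rw [← eq_limitSignal hmono hfg hur (min_le_left _ _),
    eq_limitSignal hmono hfg ((max_le_max_right 0 htu).trans_lt hur) (min_le_right _ _)]

variable {x : ℕ → ℝ → Γ} {τD : ℝ} {N₀ : ℕ}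

theorem monotoneOn_of_eventually_switchCount_eq (hx : ∀ l, IsSwitchingSignal (x l) τD N₀)
    (hτ : 0 < τD) (hg : ∀ q : ℚ, ∀ᶠ l in atTop, switchCount (x l) q = g q) :
    MonotoneOn g (Ici 0) := by
  intro q hq r _ hqr
  obtain ⟨l, hlq, hlr⟩ := ((hg q).and (hg r)).exists
  rw [← hlq, ← hlr, switchCount_eq_add (a := q) ((hx l).finite_switchTimes_inter_Ioc hτ r)
    (by exact_mod_cast mem_Ici.1 hq) (by exact_mod_cast hqr)]
  exact Nat.le_add_right _ _

theorem eventually_eqOn_Icc_of_eq (hx : ∀ l, IsSwitchingSignal (x l) τD N₀) (hτ : 0 < τD)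
    (hg : ∀ q : ℚ, ∀ᶠ l in atTop, switchCount (x l) q = g q) {q r : ℚ} (hq : 0 ≤ q)
    (hqr : q ≤ r) (hgqr : g q = g r) :
    ∀ᶠ l in atTop, ∀ t ∈ Icc (q : ℝ) r, x l t = x l q := by
  have hq' : (0 : ℝ) ≤ q := by exact_mod_cast hq
  have hqr' : (q : ℝ) ≤ r := by exact_mod_cast hqr
  filter_upwards [hg q, hg r] with l hlq hlr t ht
  have hfin := (hx l).finite_switchTimes_inter_Ioc hτ r
  have hempty : SwitchTimes (x l) ∩ Ioc (q : ℝ) r = ∅ := by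
    have hcount := switchCount_eq_add hfin hq' hqr'
    rw [hlq, hlr, hgqr] at hcount
    exact (ncard_eq_zero (hfin.subset (inter_subset_inter_right _ (Ioc_subset_Ioc_left hq')))).1
      (by omega)
  exact (hx l).1.eq_of_switchTimes_inter_Ioc_eq_empty hq' ht.1
    (subset_eq_empty (inter_subset_inter_right _ (Ioc_subset_Ioc_right ht.2)) hempty)

theorem eq_of_eventually_switchCount_eq (hx : ∀ l, IsSwitchingSignal (x l) τD N₀)
    (hτ : 0 < τD) (hf : ∀ q : ℚ, ∀ᶠ l in atTop, x l q = f q)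
    (hg : ∀ q : ℚ, ∀ᶠ l in atTop, switchCount (x l) q = g q) :
    ∀ q r : ℚ, 0 ≤ q → 0 ≤ r → g q = g r → f q = f r := by
  intro q r hq hr hgqr
  wlog hqr : q ≤ r generalizing q r
  · exact (this r q hr hq hgqr.symm (le_of_not_ge hqr)).symm
  obtain ⟨l, hl, hlq, hlr⟩ :=
    ((eventually_eqOn_Icc_of_eq hx hτ hg hq hqr hgqr).and ((hf q).and (hf r))).exists
  rw [← hlq, ← hlr, hl r ⟨by exact_mod_cast hqr, le_rfl⟩]

theorem eventually_eq_limitSignal (hx : ∀ l, IsSwitchingSignal (x l) τD N₀) (hτ : 0 < τD)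
    (hf : ∀ q : ℚ, ∀ᶠ l in atTop, x l q = f q)
    (hg : ∀ q : ℚ, ∀ᶠ l in atTop, switchCount (x l) q = g q) {t : ℝ} (ht : 0 < t)
    (htL : t ∉ LimSwitchTimes x) : ∀ᶠ l in atTop, x l t = limitSignal f g t := by
  have hmono := monotoneOn_of_eventually_switchCount_eq hx hτ hg
  have hfg := eq_of_eventually_switchCount_eq hx hτ hf hg
  have hρ := lt_rightRat g t
  rw [max_eq_left ht.le] at hρ
  have hρ0 : (0 : ℚ) ≤ rightRat g t := by exact_mod_cast (ht.trans hρ).le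
  by_cases hq : ∃ q : ℚ, 0 ≤ q ∧ (q : ℝ) ≤ t ∧ g q = g (rightRat g t)
  · obtain ⟨q, hq0, hqt, hgq⟩ := hq
    have hqρ : q ≤ rightRat g t := by exact_mod_cast hqt.trans hρ.le
    filter_upwards [eventually_eqOn_Icc_of_eq hx hτ hg hq0 hqρ hgq, hf q] with l hl hlq
    rw [hl t ⟨hqt, hρ.le⟩, hlq]
    exact hfg _ _ hq0 hρ0 hgq
  -- otherwise `g` jumps at `t`, so the switch counts jump in every neighbourhood of `t`
  refine absurd (mem_limSwitchTimes_of_forall_exists fun ε hε => ?_) htL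
  obtain ⟨q, hq₁, hq₂⟩ := exists_rat_btwn (max_lt (sub_lt_self t hε) ht)
  obtain ⟨r, hr₁, hr₂⟩ := exists_rat_btwn (lt_min (lt_add_of_pos_right t hε) hρ)
  have hq0 : (0 : ℚ) ≤ q := by exact_mod_cast ((le_max_right _ _).trans hq₁.le)
  have hqr : q ≤ r := by exact_mod_cast hq₂.le.trans hr₁.le
  have hgr : g r = g (rightRat g t) :=
    apply_eq_apply_rightRat hmono (by rwa [max_eq_left ht.le])
      (by exact_mod_cast hr₂.le.trans (min_le_right _ _))
  have hgqr : g q < g r := (hmono hq0 (hq0.trans hqr) hqr).lt_of_ne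
    fun h => hq ⟨q, hq0, hq₂.le, h.trans hgr⟩
  refine ⟨q, r, (le_max_left _ _).trans_lt hq₁, hr₂.trans_le (min_le_left _ _), ?_⟩
  filter_upwards [hg q, hg r] with l hlq hlr
  have hcount := switchCount_eq_add (a := q) ((hx l).finite_switchTimes_inter_Ioc hτ r)
    (by exact_mod_cast hq0) (by exact_mod_cast hqr)
  exact nonempty_of_ncard_ne_zero (by omega)

theorem switchTimes_limitSignal_subset (hx : ∀ l, IsSwitchingSignal (x l) τD N₀)
    (hτ : 0 < τD) (hf : ∀ q : ℚ, ∀ᶠ l in atTop, x l q = f q)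
    (hg : ∀ q : ℚ, ∀ᶠ l in atTop, switchCount (x l) q = g q) :
    SwitchTimes (limitSignal f g) ⊆ LimSwitchTimes x := by
  have hmono := monotoneOn_of_eventually_switchCount_eq hx hτ hg
  have hfg := eq_of_eventually_switchCount_eq hx hτ hf hg
  rintro s ⟨hs0, hs⟩
  refine mem_limSwitchTimes_of_forall_exists fun ε hε => ?_
  obtain ⟨u, hsu, hus, hne⟩ := hs (min ε s) (lt_min hε hs0)
  have hu0 : 0 < u := by linarith [min_le_right ε s]
  have hρu := lt_rightRat g u
  have hρs := lt_rightRat g s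
  rw [max_eq_left hu0.le] at hρu
  rw [max_eq_left hs0.le] at hρs
  obtain ⟨a, ha₁, ha₂⟩ := exists_rat_btwn (lt_min hρu hus)
  obtain ⟨b, hb₁, hb₂⟩ := exists_rat_btwn (lt_min hρs (lt_add_of_pos_right s hε))
  have hfa : f a = limitSignal f g u := eq_limitSignal hmono hfg (by rwa [max_eq_left hu0.le])
    (by exact_mod_cast ha₂.le.trans (min_le_left _ _))
  have hfb : f b = limitSignal f g s := eq_limitSignal hmono hfg (by rwa [max_eq_left hs0.le])
    (by exact_mod_cast hb₂.le.trans (min_le_left _ _))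
  have has : (a : ℝ) < s := ha₂.trans_le (min_le_right _ _)
  refine ⟨a, b, by linarith [min_le_left ε s], hb₂.trans_le (min_le_right _ _), ?_⟩
  filter_upwards [hf a, hf b] with l hla hlb
  refine (hx l).1.switchTimes_inter_Ioc_nonempty (hu0.trans ha₁).le (has.trans hb₁).le ?_
  rw [hla, hlb, hfa, hfb]
  exact hne.symm

theorem isSwitchingSignal_limitSignal (hx : ∀ l, IsSwitchingSignal (x l) τD N₀)
    (hτ : 0 < τD) (hf : ∀ q : ℚ, ∀ᶠ l in atTop, x l q = f q)
    (hg : ∀ q : ℚ, ∀ᶠ l in atTop, switchCount (x l) q = g q) :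
    IsSwitchingSignal (limitSignal f g) τD N₀ :=
  ⟨rightLocConst_limitSignal (monotoneOn_of_eventually_switchCount_eq hx hτ hg)
      (eq_of_eventually_switchCount_eq hx hτ hf hg),
    hasADT_of_switchTimes_subset_limSwitchTimes hx hτ (switchTimes_limitSignal_subset hx hτ hf hg)⟩

end LimitSignal

/-- any sequence of switching signals with average dwell-time `τD > 0` and
chatter bound `N₀`, valued in the finite set `Γ = Fin m`, has a subsequence converging
almost everywhere on `[0,∞)` (i.e. eventually equal, since `Γ` is discrete) to a
switching signal with the same average dwell-time and chatter bound. -/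
theorem stmt3 {m : ℕ} (τD : ℝ) (hτ : 0 < τD) (N₀ : ℕ)
    (σ : ℕ → ℝ → Fin m) (hσ : ∀ k, IsSwitchingSignal (σ k) τD N₀) :
    ∃ φ : ℕ → ℕ, StrictMono φ ∧ ∃ σ' : ℝ → Fin m, IsSwitchingSignal σ' τD N₀ ∧
      ∀ᵐ t ∂(volume.restrict (Set.Ici (0:ℝ))), ∀ᶠ l in atTop, σ (φ l) t = σ' t := by
  obtain ⟨φ, hφ, y, hy⟩ := exists_strictMono_eventually_eq fun k (q : ℚ) =>
    ((σ k q, ⟨switchCount (σ k) q, Nat.lt_succ_of_le ((hσ k).switchCount_le hτ q)⟩) :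
      Fin m × Fin (⌊(N₀ : ℝ) + (|(q : ℝ)| + 1) / τD⌋₊ + 1))
  have hx : ∀ l, IsSwitchingSignal (σ (φ l)) τD N₀ := fun l => hσ (φ l)
  have hf : ∀ q : ℚ, ∀ᶠ l in atTop, σ (φ l) q = (y q).1 :=
    fun q => (hy q).mono fun _ h => congrArg Prod.fst h
  have hg : ∀ q : ℚ, ∀ᶠ l in atTop, switchCount (σ (φ l)) q = (y q).2 :=
    fun q => (hy q).mono fun _ h => congrArg (fun p => (p.2 : ℕ)) h
  refine ⟨φ, hφ, _, isSwitchingSignal_limitSignal hx hτ hf hg, ?_⟩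
  have hnull := ((countable_limSwitchTimes_inter_Ioi hx hτ).insert 0).ae_notMem volume
  rw [ae_restrict_iff' measurableSet_Ici]
  filter_upwards [hnull] with t ht ht0
  have ht_pos : 0 < t := (mem_Ici.1 ht0).lt_of_ne' fun h => ht (h ▸ mem_insert _ _)
  exact eventually_eq_limitSignal hx hτ hf hg ht_pos
    fun h => ht (mem_insert_of_mem _ ⟨h, ht_pos⟩)
end

section
/- Let (x, σ) be a bounded trajectory of the switched system whose switching signal σ has positive average dwell-time. Then Ω(x) = π₁(Ω^♯(x,σ)), where π₁: ℝⁿ × Γ → ℝⁿ is the projection onto the first component. -/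
/-!
Along a bounded trajectory the vector field is bounded, so `x` is Lipschitz on `[0, ∞)` (the
integrand is continuous off the countable set of switching times). Given `t k → ∞` with
`x (t k) → ξ`, look at the successive switching times after `t k`. The average dwell-time
bound forbids `N₀ + 1` of them within `τD / 2` of `t k`, so after passing to a subsequence
some gap between consecutive ones has a positive limit `r`, while the switches before it
converge to `t k`. Starting from the switch that opens this gap gives times `s k` with
`s k - t k → 0`, hence `x (s k) → ξ`, and `τ¹(s k) - s k → r > 0`.
-/

open Filter Set MeasureTheory Metric

/-- A trajectory of the switched system `ẋ = f(x,σ)`: a continuous curve satisfying the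
integral equation on `[0,∞)`. -/
def IsTrajectory {n m : ℕ}
    (f : EuclideanSpace ℝ (Fin n) → Fin m → EuclideanSpace ℝ (Fin n))
    (x : ℝ → EuclideanSpace ℝ (Fin n)) (σ : ℝ → Fin m) : Prop :=
  ContinuousOn x (Set.Ici 0) ∧
  ∀ t : ℝ, 0 ≤ t → x t = x 0 + ∫ s in (0:ℝ)..t, f (x s) (σ s)

/-- The ω-limit set of `x : ℝ → ℝⁿ` (restricted to `[0,∞)`). -/
def OmegaLimit {n : ℕ} (x : ℝ → EuclideanSpace ℝ (Fin n)) : Set (EuclideanSpace ℝ (Fin n)) :=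
  {ξ | ∃ s : ℕ → ℝ, StrictMono s ∧ (∀ k, 0 ≤ s k) ∧ Filter.Tendsto s Filter.atTop Filter.atTop ∧
    Filter.Tendsto (fun k => x (s k)) Filter.atTop (nhds ξ)}

/-- `τ¹_σ(t)`: the first switching time of `σ` strictly greater than `t`
(`∞`, i.e. `⊤ : EReal`, if there is none). -/
noncomputable def tau1 {Γ : Type*} (σ : ℝ → Γ) (t : ℝ) : EReal :=
  sInf ((fun s : ℝ => (s : EReal)) '' (SwitchTimes σ ∩ Set.Ioi t))

/-- `Ω^♯(x,σ)`: the pairs `(ξ,γ)` for which there is a strictly increasing unbounded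
sequence of nonnegative times `s k` with `τ¹_σ(s k) - s k → r` for some `r ∈ (0,∞]`,
`x (s k) → ξ` and `σ (s k) → γ` (eventually equal, `Γ` being discrete). -/
def OmegaSharp {n m : ℕ} (x : ℝ → EuclideanSpace ℝ (Fin n)) (σ : ℝ → Fin m) :
    Set (EuclideanSpace ℝ (Fin n) × Fin m) :=
  {p | ∃ s : ℕ → ℝ, StrictMono s ∧ (∀ k, 0 ≤ s k) ∧
    Filter.Tendsto s Filter.atTop Filter.atTop ∧
    (∃ r : EReal, 0 < r ∧
      Filter.Tendsto (fun k => tau1 σ (s k) - ((s k : ℝ) : EReal)) Filter.atTop (nhds r)) ∧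
    Filter.Tendsto (fun k => x (s k)) Filter.atTop (nhds p.1) ∧
    (∀ᶠ k in Filter.atTop, σ (s k) = p.2)}

open Topology

lemma finite_inter_Ioo_of_ncard_le_s9 {A : Set ℝ} {τ₁ τ₂ K : ℝ}
    (hA : ∀ a, ∃ ε > 0, ∀ s ∈ Ioo a (a + ε), s ∉ A)
    (hK : ∀ b, τ₁ < b → b ≤ τ₂ → ((A ∩ Ioo τ₁ b).ncard : ℝ) ≤ K) :
    (A ∩ Ioo τ₁ τ₂).Finite := by
  by_contra hinf
  set B := {b | (A ∩ Ioo τ₁ b).Infinite}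
  have hτ₂B : τ₂ ∈ B := hinf
  have hBbdd : BddBelow B := ⟨τ₁, fun b hb => by
    obtain ⟨s, -, hs⟩ := hb.nonempty
    exact (hs.1.trans hs.2).le⟩
  set a := sInf B
  have hfin_lt : ∀ b < a, (A ∩ Ioo τ₁ b).Finite := fun b hb =>
    not_not.1 fun h => (csInf_le hBbdd h).not_gt hb
  -- no point of `A` lies just to the right of `a`, so the infinitely many points come from below
  have hinf_a : (A ∩ Ioo τ₁ a).Infinite := by
    obtain ⟨ε, hε, hgap⟩ := hA a
    obtain ⟨b, hbB, hb⟩ := exists_lt_of_csInf_lt ⟨τ₂, hτ₂B⟩ (lt_add_of_pos_right a hε)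
    refine fun hfin => hbB ((hfin.union (finite_singleton a)).subset ?_)
    rintro s ⟨hsA, hs₁, hsb⟩
    rcases lt_trichotomy s a with h | rfl | h
    · exact Or.inl ⟨hsA, hs₁, h⟩
    · exact Or.inr rfl
    · exact absurd hsA (hgap s ⟨h, hsb.trans hb⟩)
  obtain ⟨N, hN⟩ := exists_nat_gt K
  obtain ⟨T, hTA, hTcard⟩ := hinf_a.exists_subset_card_eq (N + 1)
  obtain ⟨s₀, hs₀⟩ : T.Nonempty := Finset.card_pos.1 (by omega)
  have hTb : ∀ᶠ b in 𝓝[<] a, ∀ s ∈ T, s < b :=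
    (eventually_all_finset T).2 fun s hs => nhdsWithin_le_nhds (lt_mem_nhds (hTA hs).2.2)
  obtain ⟨b, hTb, hba⟩ := (hTb.and self_mem_nhdsWithin).exists
  have hcard : N + 1 ≤ (A ∩ Ioo τ₁ b).ncard := by
    rw [← hTcard, ← ncard_coe_finset]
    exact ncard_le_ncard (fun s hs => ⟨(hTA hs).1, (hTA hs).2.1, hTb s hs⟩) (hfin_lt b hba)
  have hK' := hK b ((hTA hs₀).2.1.trans (hTb s₀ hs₀)) (hba.le.trans (csInf_le hBbdd hτ₂B))
  have : ((N + 1 : ℕ) : ℝ) ≤ K := (Nat.cast_le.2 hcard).trans hK'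
  push_cast at this
  linarith

section SwitchingSignal

variable {Γ : Type*} {σ : ℝ → Γ} {τD : ℝ} {N₀ : ℕ}

lemma RightLocConst.exists_notMem_switchTimes (hσ : RightLocConst σ) (a : ℝ) :
    ∃ ε > 0, ∀ s ∈ Ioo a (a + ε), s ∉ SwitchTimes σ := by
  obtain ⟨ε, hε, hconst⟩ := hσ a
  refine ⟨ε, hε, fun s ⟨has, hsa⟩ ⟨_, hsw⟩ => ?_⟩
  obtain ⟨u, hu, hus, hne⟩ := hsw (s - a) (by linarith)
  exact hne ((hconst u (by linarith) (by linarith)).trans (hconst s has.le hsa).symm)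

lemma RightLocConst.eventuallyEq_of_notMem_switchTimes (hσ : RightLocConst σ) {s : ℝ}
    (hs : 0 < s) (hsw : s ∉ SwitchTimes σ) : σ =ᶠ[𝓝 s] fun _ => σ s := by
  obtain ⟨ε₁, hε₁, hleft⟩ : ∃ ε > 0, ∀ u, s - ε < u → u < s → σ u = σ s := by
    simpa [SwitchTimes, hs] using hsw
  obtain ⟨ε₂, hε₂, hright⟩ := hσ s
  filter_upwards [Ioo_mem_nhds (sub_lt_self s hε₁) (lt_add_of_pos_right s hε₂)] with u hu
  rcases lt_or_ge u s with h | h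
  exacts [hleft u hu.1 h, hright u h hu.2]

lemma coe_le_tau1 (σ : ℝ → Γ) (t : ℝ) : (t : EReal) ≤ tau1 σ t :=
  le_sInf <| by
    rintro _ ⟨s, ⟨-, hs⟩, rfl⟩
    exact EReal.coe_le_coe_iff.2 (le_of_lt hs)

namespace IsSwitchingSignal

lemma finite_switchTimes_inter_Ioo_s9 (hσ : IsSwitchingSignal σ τD N₀) (hτ : 0 < τD) {τ₁ : ℝ}
    (τ₂ : ℝ) (h₁ : 0 ≤ τ₁) : (SwitchTimes σ ∩ Ioo τ₁ τ₂).Finite :=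
  finite_inter_Ioo_of_ncard_le_s9 (K := N₀ + (τ₂ - τ₁) / τD) hσ.1.exists_notMem_switchTimes
    fun b hb hbτ₂ => by
      have hADT := hσ.2 τ₁ b h₁ hb
      rw [Nat.card_coe_set_eq] at hADT
      have : (b - τ₁) / τD ≤ (τ₂ - τ₁) / τD := by gcongr
      linarith

lemma countable_switchTimes (hσ : IsSwitchingSignal σ τD N₀) (hτ : 0 < τD) :
    (SwitchTimes σ).Countable := by
  refine (countable_iUnion fun k : ℕ =>
    (hσ.finite_switchTimes_inter_Ioo_s9 hτ k le_rfl).countable).mono fun s hs => ?_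
  obtain ⟨k, hk⟩ := exists_nat_gt s
  exact mem_iUnion.2 ⟨k, hs, hs.1, hk⟩

lemma exists_tau1_eq (hσ : IsSwitchingSignal σ τD N₀) (hτ : 0 < τD) {t : ℝ} (ht : 0 ≤ t)
    (htop : tau1 σ t ≠ ⊤) : ∃ s ∈ SwitchTimes σ, t < s ∧ tau1 σ t = s := by
  obtain ⟨s₀, hs₀⟩ : (SwitchTimes σ ∩ Ioi t).Nonempty := by
    refine nonempty_iff_ne_empty.2 fun h => htop ?_
    rw [tau1, h, image_empty, sInf_empty]
  obtain ⟨s, ⟨hsS, hts, hss₀⟩, hmin⟩ := Set.exists_min_image _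
    id (hσ.finite_switchTimes_inter_Ioo_s9 hτ (s₀ + 1) ht) ⟨s₀, hs₀.1, hs₀.2, lt_add_one s₀⟩
  refine ⟨s, hsS, hts, IsGLB.sInf_eq (IsLeast.isGLB ⟨mem_image_of_mem _ ⟨hsS, hts⟩, ?_⟩)⟩
  rintro _ ⟨v, ⟨hvS, hvt⟩, rfl⟩
  rcases le_or_gt (s₀ + 1) v with h | h
  · exact EReal.coe_le_coe_iff.2 (hss₀.le.trans h)
  · exact EReal.coe_le_coe_iff.2 (hmin v ⟨hvS, hvt, h⟩)

end IsSwitchingSignal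

noncomputable def timeToSwitch (σ : ℝ → Γ) (t : ℝ) : EReal := tau1 σ t - t

/-- The first switching time after `t`, or `t` itself if there is none (`⊤.toReal = 0`). -/
noncomputable def nextSwitch (σ : ℝ → Γ) (t : ℝ) : ℝ := t + (timeToSwitch σ t).toReal

lemma timeToSwitch_nonneg (σ : ℝ → Γ) (t : ℝ) : 0 ≤ timeToSwitch σ t :=
  (EReal.sub_nonneg (Or.inr (EReal.coe_ne_top t)) (Or.inr (EReal.coe_ne_bot t))).2
    (coe_le_tau1 σ t)

lemma nextSwitch_sub_self (σ : ℝ → Γ) (t : ℝ) :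
    nextSwitch σ t - t = (timeToSwitch σ t).toReal :=
  add_sub_cancel_left _ _

lemma le_nextSwitch (σ : ℝ → Γ) (t : ℝ) : t ≤ nextSwitch σ t :=
  le_add_of_nonneg_right (EReal.toReal_nonneg (timeToSwitch_nonneg σ t))

lemma monotone_iterate_nextSwitch (σ : ℝ → Γ) (t : ℝ) :
    Monotone fun j => (nextSwitch σ)^[j] t :=
  monotone_nat_of_le_succ fun j => by
    simp only [Function.iterate_succ_apply']
    exact le_nextSwitch σ _

lemma le_iterate_nextSwitch (σ : ℝ → Γ) (t : ℝ) (j : ℕ) : t ≤ (nextSwitch σ)^[j] t :=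
  monotone_iterate_nextSwitch σ t (Nat.zero_le j)

namespace IsSwitchingSignal

lemma nextSwitch_mem_switchTimes (hσ : IsSwitchingSignal σ τD N₀) (hτ : 0 < τD) {t : ℝ}
    (ht : 0 ≤ t) (hfin : timeToSwitch σ t ≠ ⊤) :
    nextSwitch σ t ∈ SwitchTimes σ ∧ t < nextSwitch σ t := by
  have htop : tau1 σ t ≠ ⊤ := fun h => hfin (by rw [timeToSwitch, h, EReal.top_sub_coe])
  obtain ⟨s, hs, hts, heq⟩ := hσ.exists_tau1_eq hτ ht htop
  have : nextSwitch σ t = s := by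
    rw [nextSwitch, timeToSwitch, heq, ← EReal.coe_sub, EReal.toReal_coe, add_sub_cancel]
  exact this ▸ ⟨hs, hts⟩

lemma natCast_le_of_iterate_nextSwitch_lt (hσ : IsSwitchingSignal σ τD N₀) (hτ : 0 < τD)
    {t τ₂ : ℝ} {J : ℕ} (ht : 0 ≤ t)
    (hfin : ∀ i < J, timeToSwitch σ ((nextSwitch σ)^[i] t) ≠ ⊤)
    (hJ : (nextSwitch σ)^[J] t < τ₂) :
    (J : ℝ) ≤ N₀ + (τ₂ - t) / τD := by
  set u : ℕ → ℝ := fun i => (nextSwitch σ)^[i] t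
  have hstep : ∀ i < J, u (i + 1) ∈ SwitchTimes σ ∧ u i < u (i + 1) := fun i hi => by
    simp only [u, Function.iterate_succ_apply']
    exact hσ.nextSwitch_mem_switchTimes hτ (ht.trans (le_iterate_nextSwitch σ t i)) (hfin i hi)
  have hmono : StrictMono fun i : Fin J => u (i + 1) := fun i i' h =>
    (monotone_iterate_nextSwitch σ t (Nat.succ_le_of_lt h)).trans_lt (hstep i' i'.2).2
  have hsub : range (fun i : Fin J => u (i + 1)) ⊆ SwitchTimes σ ∩ Ioo t τ₂ := by
    rintro _ ⟨i, rfl⟩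
    exact ⟨(hstep i i.2).1, (le_iterate_nextSwitch σ t i).trans_lt (hstep i i.2).2,
      (monotone_iterate_nextSwitch σ t (Nat.succ_le_of_lt i.2)).trans_lt hJ⟩
  have hcard : J ≤ (SwitchTimes σ ∩ Ioo t τ₂).ncard := by
    simpa [ncard_range_of_injective hmono.injective] using
      ncard_le_ncard hsub (hσ.finite_switchTimes_inter_Ioo_s9 hτ τ₂ ht)
  have hADT := hσ.2 t τ₂ ht ((le_iterate_nextSwitch σ t J).trans_lt hJ)
  rw [Nat.card_coe_set_eq] at hADT
  exact (Nat.cast_le.2 hcard).trans hADT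

lemma exists_subseq_tendsto_timeToSwitch_pos (hσ : IsSwitchingSignal σ τD N₀) (hτ : 0 < τD)
    {t : ℕ → ℝ} (ht : ∀ k, 0 ≤ t k) :
    ∃ (j : ℕ) (φ : ℕ → ℕ) (r : EReal), StrictMono φ ∧ 0 < r ∧
      Tendsto (fun k => (nextSwitch σ)^[j] (t (φ k)) - t (φ k)) atTop (𝓝 0) ∧
      Tendsto (fun k => timeToSwitch σ ((nextSwitch σ)^[j] (t (φ k)))) atTop (𝓝 r) := by
  -- Otherwise, by induction on `j`, along a subsequence the first `j` switches after `t k`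
  -- all crowd into `t k`.
  by_contra hno
  have hcrowd : ∀ j, ∃ φ : ℕ → ℕ, StrictMono φ ∧
      Tendsto (fun k => (nextSwitch σ)^[j] (t (φ k)) - t (φ k)) atTop (𝓝 0) ∧
      ∀ᶠ k in atTop, ∀ i < j, timeToSwitch σ ((nextSwitch σ)^[i] (t (φ k))) ≠ ⊤ := by
    intro j
    induction j with
    | zero => exact ⟨id, strictMono_id, by simp, by simp⟩
    | succ j ih =>
      obtain ⟨φ, hφ, hφ0, hφfin⟩ := ih
      set s : ℕ → ℝ := fun k => (nextSwitch σ)^[j] (t (φ k))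
      obtain ⟨r, -, ψ, hψ, hr⟩ := isCompact_univ.tendsto_subseq
        (x := fun k => timeToSwitch σ (s k)) fun _ => mem_univ _
      have hr0 : r = 0 :=
        (ge_of_tendsto' hr fun k => timeToSwitch_nonneg σ _).eq_of_not_lt' fun hpos =>
          hno ⟨j, φ ∘ ψ, r, hφ.comp hψ, hpos, hφ0.comp hψ.tendsto_atTop, hr⟩
      subst hr0
      have hgap : Tendsto (fun k => nextSwitch σ (s (ψ k)) - s (ψ k)) atTop (𝓝 0) := by
        simpa only [nextSwitch_sub_self, EReal.toReal_zero, Function.comp_def] using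
          (EReal.tendsto_toReal EReal.zero_ne_top EReal.zero_ne_bot).comp hr
      refine ⟨φ ∘ ψ, hφ.comp hψ, ?_, ?_⟩
      · have hsum := hgap.add (hφ0.comp hψ.tendsto_atTop)
        rw [add_zero] at hsum
        refine hsum.congr fun k => ?_
        simp [s, Function.iterate_succ_apply']
      · filter_upwards [hψ.tendsto_atTop.eventually hφfin, hr.eventually_ne EReal.zero_ne_top]
          with k hk hk' i hi
        rcases Nat.lt_succ_iff_lt_or_eq.1 hi with hi | rfl
        exacts [hk i hi, hk']
  -- `N₀ + 1` switches within `τD / 2` of `t k` violate the average dwell-time bound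
  obtain ⟨φ, -, hφ0, hφfin⟩ := hcrowd (N₀ + 1)
  obtain ⟨k, hk, hkfin⟩ := ((hφ0.eventually (gt_mem_nhds (half_pos hτ))).and hφfin).exists
  have := hσ.natCast_le_of_iterate_nextSwitch_lt hτ (ht _) hkfin
    (τ₂ := t (φ k) + τD / 2) (by linarith)
  rw [add_sub_cancel_left, div_div_cancel_left' hτ.ne'] at this
  push_cast at this
  linarith

end IsSwitchingSignal

end SwitchingSignal

lemma integrableOn_of_continuousAt_of_countable {E : Type*} [NormedAddCommGroup E]
    {g : ℝ → E} {U S : Set ℝ} {C : ℝ} (hU : MeasurableSet U) (hUfin : volume U ≠ ⊤)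
    (hS : S.Countable) (hg : ∀ s ∈ U \ S, ContinuousAt g s) (hC : ∀ s ∈ U, ‖g s‖ ≤ C) :
    IntegrableOn g U := by
  have hUS : U \ S =ᵐ[volume] U :=
    sdiff_ae_eq_self.2 (measure_mono_null inter_subset_right (hS.measure_zero volume))
  refine IntegrableOn.congr_set_ae ?_ hUS.symm
  refine Integrable.mono'
    (integrableOn_const (ne_top_of_le_ne_top hUfin (measure_mono sdiff_subset)))
    (ContinuousOn.aestronglyMeasurable (fun s hs => (hg s hs).continuousWithinAt)
      (hU.diff hS.measurableSet)) ?_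
  filter_upwards [ae_restrict_mem (hU.diff hS.measurableSet)] with s hs
  exact hC s hs.1

lemma exists_norm_le_of_continuous_of_norm_le {E F Γ : Type*} [NormedAddCommGroup E]
    [ProperSpace E] [NormedAddCommGroup F] [TopologicalSpace Γ] [DiscreteTopology Γ] [Finite Γ]
    {g : E → Γ → F} (hg : ∀ γ, Continuous fun ξ => g ξ γ) {x : ℝ → E} (σ : ℝ → Γ) {M : ℝ}
    (hM : ∀ t, 0 ≤ t → ‖x t‖ ≤ M) : ∃ C, ∀ t, 0 ≤ t → ‖g (x t) (σ t)‖ ≤ C := by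
  have hcont : Continuous fun p : Γ × E => g p.2 p.1 := continuous_prod_of_discrete_left.2 hg
  obtain ⟨C, hC⟩ := (isCompact_univ.prod (isCompact_closedBall (0 : E) M))
    |>.exists_bound_of_continuousOn hcont.continuousOn
  exact ⟨C, fun t ht => hC (σ t, x t) ⟨mem_univ _, mem_closedBall_zero_iff.2 (hM t ht)⟩⟩

lemma IsTrajectory.exists_lipschitzOnWith {n m : ℕ}
    {f : EuclideanSpace ℝ (Fin n) → Fin m → EuclideanSpace ℝ (Fin n)}
    (hf : ∀ γ : Fin m, Continuous (fun ξ => f ξ γ))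
    {x : ℝ → EuclideanSpace ℝ (Fin n)} {σ : ℝ → Fin m} (htraj : IsTrajectory f x σ)
    {τD : ℝ} (hτ : 0 < τD) {N₀ : ℕ} (hσ : IsSwitchingSignal σ τD N₀)
    {M : ℝ} (hM : ∀ t : ℝ, 0 ≤ t → ‖x t‖ ≤ M) :
    ∃ K, LipschitzOnWith K x (Ici 0) := by
  obtain ⟨hxc, hxint⟩ := htraj
  obtain ⟨C, hC⟩ := exists_norm_le_of_continuous_of_norm_le hf σ hM
  have hint : ∀ t, 0 ≤ t → IntervalIntegrable (fun s => f (x s) (σ s)) volume 0 t := by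
    intro t ht
    rw [intervalIntegrable_iff, uIoc_of_le ht]
    refine integrableOn_of_continuousAt_of_countable measurableSet_Ioc measure_Ioc_lt_top.ne
      (hσ.countable_switchTimes hτ) (fun s ⟨hs, hsw⟩ => ?_) fun s hs => hC s hs.1.le
    have hσs : (fun u => f (x u) (σ u)) =ᶠ[𝓝 s] fun u => f (x u) (σ s) :=
      (hσ.1.eventuallyEq_of_notMem_switchTimes hs.1 hsw).mono fun u hu => congrArg (f (x u)) hu
    exact ((hf (σ s)).continuousAt.comp (hxc.continuousAt (Ici_mem_nhds hs.1))).congr hσs.symm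
  refine ⟨C.toNNReal, LipschitzOnWith.of_dist_le_mul fun a ha b hb => ?_⟩
  rw [dist_eq_norm, hxint a ha, hxint b hb, add_sub_add_left_eq_sub,
    intervalIntegral.integral_interval_sub_left (hint a ha) (hint b hb), Real.dist_eq]
  refine intervalIntegral.norm_integral_le_of_norm_le_const fun s hs =>
    (hC s ?_).trans (Real.le_coe_toNNReal C)
  exact (le_min hb ha).trans hs.1.le

section OmegaLimit

variable {n m : ℕ} {x : ℝ → EuclideanSpace ℝ (Fin n)} {σ : ℝ → Fin m}

lemma mem_image_fst_omegaSharp {s : ℕ → ℝ} {r : EReal} {ξ : EuclideanSpace ℝ (Fin n)}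
    (hs0 : ∀ k, 0 ≤ s k) (hs : Tendsto s atTop atTop) (hr : 0 < r)
    (hgap : Tendsto (fun k => timeToSwitch σ (s k)) atTop (𝓝 r))
    (hx : Tendsto (fun k => x (s k)) atTop (𝓝 ξ)) : ξ ∈ Prod.fst '' OmegaSharp x σ := by
  obtain ⟨γ, -, φ, hφ, hγ⟩ := isCompact_univ.tendsto_subseq (x := σ ∘ s) fun _ => mem_univ _
  obtain ⟨ψ, hψ, hsψ⟩ := strictMono_subseq_of_tendsto_atTop (hs.comp hφ.tendsto_atTop)
  have hφψ : Tendsto (φ ∘ ψ) atTop atTop := (hφ.comp hψ).tendsto_atTop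
  refine ⟨(ξ, γ), ⟨s ∘ φ ∘ ψ, hsψ, fun k => hs0 _, hs.comp hφψ, ⟨r, hr, hgap.comp hφψ⟩,
    hx.comp hφψ, ?_⟩, rfl⟩
  rw [nhds_discrete, tendsto_pure] at hγ
  exact hψ.tendsto_atTop.eventually hγ

lemma omegaLimit_subset_image_fst_omegaSharp {τD : ℝ} {N₀ : ℕ} (hσ : IsSwitchingSignal σ τD N₀)
    (hτ : 0 < τD) {K : NNReal} (hx : LipschitzOnWith K x (Ici 0)) :
    OmegaLimit x ⊆ Prod.fst '' OmegaSharp x σ := by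
  rintro ξ ⟨t, -, ht0, htop, htξ⟩
  obtain ⟨j, φ, r, hφ, hr, hclose, hgap⟩ := hσ.exists_subseq_tendsto_timeToSwitch_pos hτ ht0
  set s : ℕ → ℝ := fun k => (nextSwitch σ)^[j] (t (φ k))
  have hts : ∀ k, t (φ k) ≤ s k := fun k => le_iterate_nextSwitch σ _ j
  refine mem_image_fst_omegaSharp (fun k => (ht0 _).trans (hts k))
    (tendsto_atTop_mono hts (htop.comp hφ.tendsto_atTop)) hr hgap
    ((htξ.comp hφ.tendsto_atTop).congr_dist ?_)
  refine squeeze_zero (fun _ => dist_nonneg)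
    (fun k => hx.dist_le_mul _ (ht0 (φ k)) _ ((ht0 _).trans (hts k))) ?_
  simpa [Real.dist_eq, abs_sub_comm] using (hclose.abs.const_mul (K : ℝ))

lemma image_fst_omegaSharp_subset_omegaLimit : Prod.fst '' OmegaSharp x σ ⊆ OmegaLimit x := by
  rintro _ ⟨_, ⟨s, hs, hs0, hstop, -, hsx, -⟩, rfl⟩
  exact ⟨s, hs, hs0, hstop, hsx⟩

end OmegaLimit

/-- for a bounded trajectory `(x,σ)` of the switched system whose switching
signal has average dwell-time `τD > 0` and chatter bound `N₀`, the ω-limit set of `x`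
equals the projection of `Ω^♯(x,σ)` onto the first component. -/
theorem stmt9 {n m : ℕ}
    (f : EuclideanSpace ℝ (Fin n) → Fin m → EuclideanSpace ℝ (Fin n))
    (hf : ∀ γ : Fin m, Continuous (fun ξ => f ξ γ))
    (x : ℝ → EuclideanSpace ℝ (Fin n)) (σ : ℝ → Fin m)
    (htraj : IsTrajectory f x σ)
    (τD : ℝ) (hτ : 0 < τD) (N₀ : ℕ) (hsig : IsSwitchingSignal σ τD N₀)
    (M : ℝ) (hM : ∀ t : ℝ, 0 ≤ t → ‖x t‖ ≤ M) :
    OmegaLimit x = Prod.fst '' OmegaSharp x σ := by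
  obtain ⟨K, hK⟩ := htraj.exists_lipschitzOnWith hf hτ hsig hM
  exact (omegaLimit_subset_image_fst_omegaSharp hsig hτ hK).antisymm
    image_fst_omegaSharp_subset_omegaLimit
end
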